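/- For every integer h ≥ 1, the diameter of MC(3^h) equals h. -/

import Mathlib

/-- The circulant graph `Cay(Z_n, S)`: vertices are `ZMod n`, and distinct
vertices `x, y` are adjacent iff `x - y ≡ s` or `y - x ≡ s (mod n)` for some `s ∈ S`. -/
def circulantGraph (n : ℕ) (S : Set ℕ) : SimpleGraph (ZMod n) where
  Adj x y := x ≠ y ∧ ∃ s ∈ S, (x - y = (s : ZMod n) ∨ y - x = (s : ZMod n))
  symm := by
    constructor
    rintro x y ⟨hne, s, hs, h⟩
    exact ⟨hne.symm, s, hs, h.symm⟩
  loopless := by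
    constructor
    rintro x ⟨hne, -⟩
    exact hne rfl

/-- The multiplicative circulant graph `MC(m^h) = Cay(Z_{m^h}, {m^0, m^1, …, m^{h-1}})`. -/
def MCGraph (m h : ℕ) : SimpleGraph (ZMod (m ^ h)) :=
  circulantGraph (m ^ h) {s | ∃ i < h, s = m ^ i}

namespace MC3aux

def Vint (h : ℕ) : ℤ := ∑ i ∈ Finset.range h, 3 ^ i

lemma Vint_succ (h : ℕ) : Vint (h+1) = 1 + 3 * Vint h := by
  unfold Vint
  rw [Finset.sum_range_succ']
  simp [pow_succ, Finset.mul_sum]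
  ring_nf

lemma split (L : List ℤ) (hL : ∀ x ∈ L, ∃ e : ℕ, x = 3 ^ e ∨ x = -3 ^ e) :
    ∃ (t : ℕ) (s : ℤ) (M : List ℤ), (∀ x ∈ M, ∃ e : ℕ, x = 3 ^ e ∨ x = -3 ^ e) ∧
      s.natAbs ≤ t ∧ t + M.length = L.length ∧ L.sum = s + 3 * M.sum := by
  induction L with
  | nil => exact ⟨0, 0, [], by simp, by simp, by simp, by simp⟩
  | cons a L ih =>
    obtain ⟨t, s, M, hM, hs, hlen, hsum⟩ := ih (fun x hx => hL x (by simp [hx]))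
    obtain ⟨e, he⟩ := hL a (by simp)
    cases e with
    | zero =>
      refine ⟨t + 1, s + a, M, hM, ?_, by simp [← hlen]; omega, by simp [hsum]; ring⟩
      have : a = 1 ∨ a = -1 := by simpa using he
      rcases this with h | h <;> simp [h] <;> omega
    | succ e =>
      rcases he with h | h
      · exact ⟨t, s, (3^e) :: M, fun x hx => (List.mem_cons.mp hx).elim
          (fun hh => ⟨e, Or.inl hh⟩) (hM x),
          hs, by simp [← hlen]; omega, by simp [hsum, h, pow_succ]; ring⟩
      · exact ⟨t, s, (-3^e) :: M, fun x hx => (List.mem_cons.mp hx).elim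
          (fun hh => ⟨e, Or.inr hh⟩) (hM x),
          hs, by simp [← hlen]; omega, by simp [hsum, h, pow_succ]; ring⟩

lemma key : ∀ (h : ℕ) (L : List ℤ), (∀ x ∈ L, ∃ e : ℕ, x = 3 ^ e ∨ x = -3 ^ e) →
    L.length < h → ¬ ((3:ℤ) ^ h ∣ L.sum - Vint h) := by
  intro h
  induction h with
  | zero => intro L _ hl; omega
  | succ h ih =>
    intro L hL hl hdvd
    obtain ⟨t, s, M, hM, hs, hlen, hsum⟩ := split L hL
    rw [hsum, Vint_succ] at hdvd
    have h3 : (3:ℤ) ∣ s - 1 := by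
      have : (3:ℤ) ∣ s + 3 * M.sum - (1 + 3 * Vint h) :=
        dvd_trans (dvd_pow_self 3 (Nat.succ_ne_zero h)) hdvd
      omega
    obtain ⟨m, hm⟩ := h3
    set L' : List ℤ := M ++ List.replicate m.natAbs (if 0 ≤ m then 1 else -1) with hL'
    have hgood : ∀ x ∈ L', ∃ e : ℕ, x = 3 ^ e ∨ x = -3 ^ e := by
      intro x hx
      rcases List.mem_append.mp hx with hx | hx
      · exact hM x hx
      · have := List.eq_of_mem_replicate hx
        by_cases h0 : 0 ≤ m <;> simp [h0] at this <;> exact ⟨0, by simp [this]⟩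
    have hrep : (List.replicate m.natAbs (if 0 ≤ m then (1:ℤ) else -1)).sum = m := by
      rw [List.sum_replicate, nsmul_eq_mul]
      by_cases h0 : 0 ≤ m
      · rw [if_pos h0, mul_one]; omega
      · rw [if_neg h0, mul_neg_one]; omega
    have hsum' : L'.sum = M.sum + m := by rw [hL', List.sum_append, hrep]
    have habs : m = (m.natAbs : ℤ) ∨ m = -(m.natAbs : ℤ) := Int.natAbs_eq m
    have hsabs : s = (s.natAbs : ℤ) ∨ s = -(s.natAbs : ℤ) := Int.natAbs_eq s
    have hlen' : L'.length < h := by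
      rw [hL', List.length_append, List.length_replicate]
      rcases habs with h1 | h1 <;> rcases hsabs with h2 | h2 <;> omega
    refine ih L' hgood hlen' ?_
    have : (3:ℤ) * (L'.sum - Vint h) = s + 3 * M.sum - (1 + 3 * Vint h) := by
      rw [hsum']; omega
    have h3h : (3:ℤ)^(h+1) = 3 * 3^h := by ring
    rw [h3h] at hdvd
    exact (mul_dvd_mul_iff_left (by norm_num : (3:ℤ) ≠ 0)).mp (this ▸ hdvd)


lemma balanced : ∀ (n : ℕ) (a : ℤ), 2 * a.natAbs < 3 ^ n →
    ∃ L : List ℤ, (∀ x ∈ L, ∃ e < n, x = 3 ^ e ∨ x = -3 ^ e) ∧ L.length ≤ n ∧ L.sum = a := by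
  intro n
  induction n with
  | zero =>
    intro a ha
    refine ⟨[], by simp, by simp, ?_⟩
    simp only [List.sum_nil]
    omega
  | succ n ih =>
    intro a ha
    set q : ℤ := (a + 1) / 3 with hq
    set r : ℤ := (a + 1) % 3 - 1 with hr
    have hqr : a = 3 * q + r := by
      have := Int.mul_ediv_add_emod (a + 1) 3
      omega
    have hrb : -1 ≤ r ∧ r ≤ 1 := by
      have h1 := Int.emod_nonneg (a + 1) (by norm_num : (3:ℤ) ≠ 0)
      have h2 := Int.emod_lt_of_pos (a + 1) (by norm_num : (0:ℤ) < 3)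
      omega
    have hodd : ∃ k, 3 ^ n = 2 * k + 1 := (Odd.pow (⟨1, rfl⟩ : Odd 3) : Odd (3 ^ n : ℕ))
    obtain ⟨k, hk⟩ := hodd
    have hp : (3:ℕ) ^ (n+1) = 3 * 3 ^ n := by ring
    rw [hp] at ha
    have hqbound : 2 * q.natAbs < 3 ^ n := by
      have h1 : a.natAbs = a ∨ (a.natAbs : ℤ) = -a := by omega
      omega
    obtain ⟨L, hgood, hlen, hsum⟩ := ih q hqbound
    refine ⟨(L.map (fun x => 3 * x)) ++ (if r = 0 then [] else [r]), ?_, ?_, ?_⟩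
    · intro x hx
      rcases List.mem_append.mp hx with hx | hx
      · obtain ⟨y, hy, rfl⟩ := List.mem_map.mp hx
        obtain ⟨e, he, hcase⟩ := hgood y hy
        refine ⟨e + 1, by omega, ?_⟩
        rcases hcase with hc | hc <;> rw [hc] <;> [left; right] <;> ring
      · by_cases h0 : r = 0
        · simp [h0] at hx
        · simp [h0] at hx
          refine ⟨0, by omega, ?_⟩
          subst hx
          simp only [pow_zero]
          omega
    · rw [List.length_append, List.length_map]
      by_cases h0 : r = 0 <;> simp [h0] <;> omega
    · rw [List.sum_append]
      have hmap : (L.map (fun x => 3 * x)).sum = 3 * L.sum := by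
        simpa using (List.sum_map_mul_left L (fun x => x) 3)
      rw [hmap, hsum]
      by_cases h0 : r = 0 <;> simp [h0] <;> omega

lemma repZMod (h : ℕ) (x : ZMod (3 ^ h)) :
    ∃ a : ℤ, ((a : ℤ) : ZMod (3 ^ h)) = x ∧ 2 * a.natAbs < 3 ^ h := by
  haveI : NeZero (3 ^ h) := ⟨by positivity⟩
  have hval : x.val < 3 ^ h := ZMod.val_lt x
  have hcast : ((x.val : ℕ) : ZMod (3 ^ h)) = x := ZMod.natCast_rightInverse x
  obtain ⟨k, hk⟩ : ∃ k, (3:ℕ) ^ h = 2 * k + 1 := (Odd.pow (⟨1, rfl⟩ : Odd 3) : Odd (3 ^ h : ℕ))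
  by_cases hc : 2 * x.val < 3 ^ h
  · exact ⟨(x.val : ℤ), by rw [Int.cast_natCast, hcast], by omega⟩
  · refine ⟨(x.val : ℤ) - 3 ^ h, ?_, by
      have hcastpow : ((3:ℤ) ^ h) = ((3 ^ h : ℕ) : ℤ) := by push_cast; ring
      rw [hcastpow]; omega⟩
    have h1 : (((x.val : ℤ) - 3 ^ h : ℤ) : ZMod (3 ^ h))
        = ((x.val : ℕ) : ZMod (3 ^ h)) - ((3 ^ h : ℕ) : ZMod (3 ^ h)) := by push_cast; ring
    rw [h1, ZMod.natCast_self, hcast, sub_zero]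

lemma adj_step (h : ℕ) (v : ZMod (3 ^ h)) (e : ℕ) (he : e < h) (a : ℤ)
    (ha : a = 3 ^ e ∨ a = -3 ^ e) :
    (MCGraph 3 h).Adj v (v + ((a : ℤ) : ZMod (3 ^ h))) := by
  have hlt : (3:ℤ) ^ e < 3 ^ h := by
    exact_mod_cast Nat.pow_lt_pow_right (by norm_num : 1 < 3) he
  have hpow : ¬ ((3:ℤ) ^ h) ∣ (3:ℤ) ^ e := fun hd =>
    absurd (Int.le_of_dvd (by positivity) hd) (not_le.mpr hlt)
  have hane : ((a : ℤ) : ZMod (3 ^ h)) ≠ 0 := by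
    rw [Ne, ZMod.intCast_zmod_eq_zero_iff_dvd]
    have hcp : ((3 ^ h : ℕ) : ℤ) = (3:ℤ) ^ h := by push_cast; ring
    rw [hcp]
    rcases ha with rfl | rfl
    · exact hpow
    · rw [dvd_neg]; exact hpow
  constructor
  · intro hcontra
    apply hane
    have : v + ((a : ℤ) : ZMod (3 ^ h)) - v = 0 := by rw [← hcontra]; ring
    rwa [add_sub_cancel_left] at this
  · refine ⟨3 ^ e, ⟨e, he, rfl⟩, ?_⟩
    rcases ha with rfl | rfl
    · right; push_cast; ring
    · left; push_cast; ring

lemma exists_walk (h : ℕ) : ∀ (L : List ℤ), (∀ x ∈ L, ∃ e < h, x = 3 ^ e ∨ x = -3 ^ e) →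
    ∀ v : ZMod (3 ^ h),
    ∃ p : (MCGraph 3 h).Walk v (v + ((L.sum : ℤ) : ZMod (3 ^ h))), p.length = L.length := by
  intro L
  induction L with
  | nil =>
    intro _ v
    have hend : v + ((([] : List ℤ).sum : ℤ) : ZMod (3 ^ h)) = v := by simp
    rw [hend]
    exact ⟨SimpleGraph.Walk.nil, rfl⟩
  | cons a L ih =>
    intro hgood v
    obtain ⟨e, he, hae⟩ := hgood a (by simp)
    have hend : v + (((a :: L).sum : ℤ) : ZMod (3 ^ h))
        = (v + ((a : ℤ) : ZMod (3 ^ h))) + ((L.sum : ℤ) : ZMod (3 ^ h)) := by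
      rw [List.sum_cons]; push_cast; ring
    rw [hend]
    obtain ⟨p, hp⟩ := ih (fun x hx => hgood x (by simp [hx])) (v + ((a : ℤ) : ZMod (3 ^ h)))
    exact ⟨SimpleGraph.Walk.cons (adj_step h v e he a hae) p, by simp [hp]⟩

lemma walk_sum (h : ℕ) {u v : ZMod (3 ^ h)} (p : (MCGraph 3 h).Walk u v) :
    ∃ L : List ℤ, (∀ x ∈ L, ∃ e : ℕ, x = 3 ^ e ∨ x = -3 ^ e) ∧ L.length = p.length ∧
      ((L.sum : ℤ) : ZMod (3 ^ h)) = v - u := by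
  induction p with
  | nil => exact ⟨[], by simp, by simp, by simp⟩
  | @cons u w v hadj p ih =>
    obtain ⟨L, hgood, hlen, hsum⟩ := ih
    obtain ⟨hne, s, ⟨i, hi, rfl⟩, hcase⟩ := hadj
    rcases hcase with hc | hc
    · refine ⟨(-((3 ^ i : ℕ) : ℤ)) :: L, ?_, by simp [hlen]; rfl, ?_⟩
      · intro x hx
        rcases List.mem_cons.mp hx with rfl | hx
        · exact ⟨i, Or.inr (by push_cast; ring)⟩
        · exact hgood x hx
      · rw [List.sum_cons, Int.cast_add, Int.cast_neg, Int.cast_natCast, hsum, ← hc]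
        ring
    · refine ⟨(((3 ^ i : ℕ)) : ℤ) :: L, ?_, by simp [hlen]; rfl, ?_⟩
      · intro x hx
        rcases List.mem_cons.mp hx with rfl | hx
        · exact ⟨i, Or.inl (by push_cast; ring)⟩
        · exact hgood x hx
      · rw [List.sum_cons, Int.cast_add, Int.cast_natCast, hsum, ← hc]
        ring

end MC3aux

/-- The diameter of `MC(3^h)` equals `h`. -/
theorem MC_three_diam (h : ℕ) (hh : 1 ≤ h) : (MCGraph 3 h).diam = h := by
  have hub : ∀ u v : ZMod (3 ^ h), (MCGraph 3 h).edist u v ≤ (h : ℕ∞) := by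
    intro u v
    obtain ⟨a, ha, hbound⟩ := MC3aux.repZMod h (v - u)
    obtain ⟨L, hgood, hlen, hsum⟩ := MC3aux.balanced h a hbound
    obtain ⟨p, hp⟩ := MC3aux.exists_walk h L hgood u
    have hend : u + ((L.sum : ℤ) : ZMod (3 ^ h)) = v := by rw [hsum, ha]; ring
    have hle := SimpleGraph.edist_le (p.copy rfl hend)
    rw [SimpleGraph.Walk.length_copy, hp] at hle
    exact hle.trans (by exact_mod_cast hlen)
  set V : ZMod (3 ^ h) := ((MC3aux.Vint h : ℤ) : ZMod (3 ^ h)) with hV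
  have hlb : (h : ℕ∞) ≤ (MCGraph 3 h).edist 0 V := by
    by_contra hlt
    push_neg at hlt
    have hne : (MCGraph 3 h).edist 0 V ≠ ⊤ := (hlt.trans (ENat.coe_lt_top h)).ne
    obtain ⟨p, hp⟩ := SimpleGraph.exists_walk_of_edist_ne_top hne
    obtain ⟨L, hgood, hlen, hsum⟩ := MC3aux.walk_sum h p
    rw [← hp] at hlt
    have hlen' : L.length < h := by rw [hlen]; exact_mod_cast hlt
    have hzero : ((L.sum - MC3aux.Vint h : ℤ) : ZMod (3 ^ h)) = 0 := by
      rw [Int.cast_sub, hsum, hV]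
      ring
    rw [ZMod.intCast_zmod_eq_zero_iff_dvd] at hzero
    have hcp : ((3 ^ h : ℕ) : ℤ) = (3:ℤ) ^ h := by push_cast; ring
    rw [hcp] at hzero
    exact MC3aux.key h L hgood hlen' hzero
  have hed : (MCGraph 3 h).ediam = (h : ℕ∞) :=
    le_antisymm (SimpleGraph.ediam_le_of_edist_le hub)
      (hlb.trans SimpleGraph.edist_le_ediam)
  rw [SimpleGraph.diam, hed]
  simp
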